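/- (Proposition 4.4 in radial form: the first nonzero Steklov eigenvalue of the geodesic ball) Let κ ≤ 0, let n ≥ 2 be an integer, let F solve the ODE of the paper with F(0) = 0, F'(0) = 1, and define G(r) := 2 F(r) F'(r) + (n−1)(sn_κ'(r)/sn_κ(r)) F(r)² and H(r) := F'(r)² + (n−1) F(r)²/sn_κ(r)². Then for every R > 0, ( ∫₀^R H(r) sn_κ(r)^{n−1} dr ) / ( ∫₀^R G(r) sn_κ(r)^{n−1} dr ) = F'(R)/F(R), which equals the first nonzero Steklov eigenvalue of the geodesic ball of radius R in the space form of curvature κ. -/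

import Mathlib

/-!
Both integrands are exact derivatives. For a positive warping function `s` and `k = n - 1`, the
product rule gives `G s^k = (F² s^k)'`, and the ODE turns `(F F' s^k)'` into `H s^k`; hence the
two integrals are `F(R)² s(R)^k` and `F(R) F'(R) s(R)^k`, whose quotient is `F'(R)/F(R)`.
The boundary term of `F F' s^k` at `0` vanishes because the ODE gives
`(F' s^k)' = k F s^(k-2) ≥ 0`: so `F' s^k` stays bounded near `0`, while `F(0) = 0`.
-/

open Set

/-- The comparison sine function `sn_κ` for `κ ≤ 0`: `sn_0(t) = t` and
`sn_κ(t) = sinh(√(-κ) t)/√(-κ)` for `κ < 0`. -/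
noncomputable def snk (κ : ℝ) (t : ℝ) : ℝ :=
  if κ = 0 then t else Real.sinh (Real.sqrt (-κ) * t) / Real.sqrt (-κ)

open Filter Topology

lemma hasDerivAt_snk {κ : ℝ} (hκ : κ ≤ 0) (t : ℝ) :
    HasDerivAt (snk κ) (Real.cosh (√(-κ) * t)) t := by
  rcases hκ.lt_or_eq with hκ | rfl
  · have ha : √(-κ) ≠ 0 := (Real.sqrt_pos.2 (neg_pos.2 hκ)).ne'
    have h := (((hasDerivAt_id' t).const_mul √(-κ)).sinh).div_const √(-κ)
    have hsnk : snk κ = fun t => Real.sinh (√(-κ) * t) / √(-κ) := by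
      funext t; simp [snk, hκ.ne]
    rw [hsnk]
    refine h.congr_deriv ?_
    field_simp
  · have hsnk : snk 0 = id := funext fun t => by simp [snk]
    simpa [hsnk] using hasDerivAt_id t

lemma snk_pos {κ t : ℝ} (hκ : κ ≤ 0) (ht : 0 < t) : 0 < snk κ t := by
  unfold snk
  split_ifs with h
  · exact ht
  · have ha : 0 < √(-κ) := Real.sqrt_pos.2 (neg_pos.2 (hκ.lt_of_ne h))
    exact div_pos (Real.sinh_pos_iff.2 (by positivity)) ha

theorem HasDerivAt.pow_of_ne_zero {s : ℝ → ℝ} {s' x : ℝ} (hs : HasDerivAt s s' x)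
    (hsx : s x ≠ 0) (k : ℕ) : HasDerivAt (fun r => s r ^ k) (k * (s' / s x) * s x ^ k) x := by
  refine (hs.fun_pow k).congr_deriv ?_
  cases k with
  | zero => simp
  | succ k => rw [Nat.add_sub_cancel]; field_simp; ring

theorem ContDiffOn.hasDerivAt_and_hasDerivAt_deriv {F : ℝ → ℝ} {U : Set ℝ} {x : ℝ}
    (hF : ContDiffOn ℝ 2 F U) (hU : IsOpen U) (hx : x ∈ U) :
    HasDerivAt F (deriv F x) x ∧ HasDerivAt (deriv F) (deriv (deriv F) x) x :=
  ⟨((hF.differentiableOn two_ne_zero).differentiableAt (hU.mem_nhds hx)).hasDerivAt,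
    (((hF.deriv_of_isOpen hU (m := 1) le_rfl).differentiableOn one_ne_zero).differentiableAt
      (hU.mem_nhds hx)).hasDerivAt⟩

theorem intervalIntegral.integral_eq_sub_of_hasDerivAt_of_nonneg {f f' : ℝ → ℝ} {a b : ℝ}
    (hab : a ≤ b) (hcont : ContinuousOn f (Icc a b))
    (hderiv : ∀ x ∈ Ioo a b, HasDerivAt f (f' x) x) (hnonneg : ∀ x ∈ Ioo a b, 0 ≤ f' x) :
    ∫ x in a..b, f' x = f b - f a :=
  integral_eq_sub_of_hasDerivAt_of_le hab hcont hderiv <|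
    (intervalIntegrable_iff_integrableOn_Ioc_of_le hab).2
      (integrableOn_deriv_of_nonneg hcont hderiv hnonneg)

section RadialSolution

variable {F s : ℝ → ℝ} {k : ℕ} {x : ℝ}

lemma hasDerivAt_sq_mul_pow (hF : HasDerivAt F (deriv F x) x) (hs : HasDerivAt s (deriv s x) x)
    (hsx : s x ≠ 0) :
    HasDerivAt (fun r => F r ^ 2 * s r ^ k)
      ((2 * F x * deriv F x + k * (deriv s x / s x) * F x ^ 2) * s x ^ k) x := by
  refine ((hF.fun_pow 2).fun_mul (hs.pow_of_ne_zero hsx k)).congr_deriv ?_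
  push_cast
  ring

lemma hasDerivAt_mul_deriv_mul_pow (hF : HasDerivAt F (deriv F x) x)
    (hF' : HasDerivAt (deriv F) (deriv (deriv F) x) x) (hs : HasDerivAt s (deriv s x) x)
    (hsx : s x ≠ 0)
    (hODE : deriv (deriv F) x + k * (deriv s x / s x) * deriv F x - (k / s x ^ 2) * F x = 0) :
    HasDerivAt (fun r => F r * deriv F r * s r ^ k)
      ((deriv F x ^ 2 + k * F x ^ 2 / s x ^ 2) * s x ^ k) x := by
  refine ((hF.fun_mul hF').fun_mul (hs.pow_of_ne_zero hsx k)).congr_deriv ?_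
  linear_combination F x * s x ^ k * hODE

lemma hasDerivAt_deriv_mul_pow (hF' : HasDerivAt (deriv F) (deriv (deriv F) x) x)
    (hs : HasDerivAt s (deriv s x) x) (hsx : s x ≠ 0)
    (hODE : deriv (deriv F) x + k * (deriv s x / s x) * deriv F x - (k / s x ^ 2) * F x = 0) :
    HasDerivAt (fun r => deriv F r * s r ^ k) (k * F x / s x ^ 2 * s x ^ k) x := by
  refine (hF'.fun_mul (hs.pow_of_ne_zero hsx k)).congr_deriv ?_
  linear_combination s x ^ k * hODE


lemma monotoneOn_deriv_mul_pow (hs : Differentiable ℝ s) (hspos : ∀ r > 0, 0 < s r)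
    (hF2 : ContDiffOn ℝ 2 F (Ioi 0))
    (hODE : ∀ r > 0,
      deriv (deriv F) r + k * (deriv s r / s r) * deriv F r - (k / s r ^ 2) * F r = 0)
    (hFpos : ∀ r > 0, 0 < F r) :
    MonotoneOn (fun r => deriv F r * s r ^ k) (Ioi 0) := by
  have hderiv : ∀ x ∈ Ioi (0 : ℝ),
      HasDerivAt (fun r => deriv F r * s r ^ k) (k * F x / s x ^ 2 * s x ^ k) x := fun x hx =>
    hasDerivAt_deriv_mul_pow (hF2.hasDerivAt_and_hasDerivAt_deriv isOpen_Ioi hx).2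
      (hs x).hasDerivAt (hspos x hx).ne' (hODE x hx)
  refine monotoneOn_of_deriv_nonneg (convex_Ioi 0) (HasDerivAt.continuousOn hderiv)
    (fun x hx => ?_) (fun x hx => ?_) <;> rw [interior_Ioi] at hx
  · exact (hderiv x hx).differentiableAt.differentiableWithinAt
  · have := hFpos x hx
    have := hspos x hx
    rw [(hderiv x hx).deriv]
    positivity

lemma tendsto_mul_deriv_mul_pow_nhdsGT_zero (hF0 : Tendsto F (𝓝[>] 0) (𝓝 0))
    (hu : MonotoneOn (fun r => deriv F r * s r ^ k) (Ioi 0)) (hspos : ∀ r > 0, 0 < s r)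
    (hFpos : ∀ r > 0, 0 < F r) (hF'pos : ∀ r > 0, 0 < deriv F r) :
    Tendsto (fun r => F r * deriv F r * s r ^ k) (𝓝[>] 0) (𝓝 0) := by
  have hbound : Tendsto (fun r => F r * (deriv F 1 * s 1 ^ k)) (𝓝[>] 0) (𝓝 0) := by
    simpa using hF0.mul_const (deriv F 1 * s 1 ^ k)
  refine tendsto_of_tendsto_of_tendsto_of_le_of_le' tendsto_const_nhds hbound ?_ ?_
  · filter_upwards [self_mem_nhdsWithin] with r (hr : 0 < r)
    have := hFpos r hr
    have := hF'pos r hr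
    have := hspos r hr
    positivity
  · filter_upwards [Ioo_mem_nhdsGT one_pos] with r ⟨hr0, hr1⟩
    rw [mul_assoc]
    exact mul_le_mul_of_nonneg_left (hu hr0 (mem_Ioi.2 one_pos) hr1.le) (hFpos r hr0).le

lemma continuousOn_mul_deriv_mul_pow (hFc : ContinuousOn F (Ici 0)) (hF0 : F 0 = 0)
    (hs : Differentiable ℝ s) (hspos : ∀ r > 0, 0 < s r) (hF2 : ContDiffOn ℝ 2 F (Ioi 0))
    (hODE : ∀ r > 0,
      deriv (deriv F) r + k * (deriv s r / s r) * deriv F r - (k / s r ^ 2) * F r = 0)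
    (hFpos : ∀ r > 0, 0 < F r) (hF'pos : ∀ r > 0, 0 < deriv F r) :
    ContinuousOn (fun r => F r * deriv F r * s r ^ k) (Ici 0) := by
  intro x hx
  rcases (mem_Ici.1 hx).eq_or_lt with rfl | hx
  · have hFc0 := continuousWithinAt_Ioi_iff_Ici.2 (hFc 0 self_mem_Ici)
    rw [ContinuousWithinAt, hF0] at hFc0
    rw [← continuousWithinAt_Ioi_iff_Ici, ContinuousWithinAt, hF0, zero_mul, zero_mul]
    exact tendsto_mul_deriv_mul_pow_nhdsGT_zero hFc0
      (monotoneOn_deriv_mul_pow hs hspos hF2 hODE hFpos) hspos hFpos hF'pos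
  · obtain ⟨hF, hF'⟩ := hF2.hasDerivAt_and_hasDerivAt_deriv isOpen_Ioi hx
    exact ((hF.continuousAt.mul hF'.continuousAt).mul
      ((hs x).continuousAt.pow k)).continuousWithinAt

lemma integral_eq_mul_deriv_mul_pow (hFc : ContinuousOn F (Ici 0)) (hF0 : F 0 = 0)
    (hs : Differentiable ℝ s) (hspos : ∀ r > 0, 0 < s r) (hF2 : ContDiffOn ℝ 2 F (Ioi 0))
    (hODE : ∀ r > 0,
      deriv (deriv F) r + k * (deriv s r / s r) * deriv F r - (k / s r ^ 2) * F r = 0)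
    (hFpos : ∀ r > 0, 0 < F r) (hF'pos : ∀ r > 0, 0 < deriv F r) {R : ℝ} (hR : 0 ≤ R) :
    ∫ r in (0 : ℝ)..R, (deriv F r ^ 2 + k * F r ^ 2 / s r ^ 2) * s r ^ k
      = F R * deriv F R * s R ^ k := by
  rw [intervalIntegral.integral_eq_sub_of_hasDerivAt_of_nonneg hR
    ((continuousOn_mul_deriv_mul_pow hFc hF0 hs hspos hF2 hODE hFpos hF'pos).mono
      Icc_subset_Ici_self) (fun x hx => ?_) (fun x hx => ?_), hF0, zero_mul, zero_mul, sub_zero]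
  · obtain ⟨hF, hF'⟩ := hF2.hasDerivAt_and_hasDerivAt_deriv isOpen_Ioi hx.1
    exact hasDerivAt_mul_deriv_mul_pow hF hF' (hs x).hasDerivAt (hspos x hx.1).ne' (hODE x hx.1)
  · have := hspos x hx.1
    positivity

lemma integral_eq_sq_mul_pow (hFc : ContinuousOn F (Ici 0)) (hF0 : F 0 = 0)
    (hs : Differentiable ℝ s) (hspos : ∀ r > 0, 0 < s r) (hs' : ∀ r > 0, 0 ≤ deriv s r)
    (hF2 : ContDiffOn ℝ 2 F (Ioi 0)) (hFpos : ∀ r > 0, 0 < F r)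
    (hF'pos : ∀ r > 0, 0 < deriv F r) {R : ℝ} (hR : 0 ≤ R) :
    ∫ r in (0 : ℝ)..R, (2 * F r * deriv F r + k * (deriv s r / s r) * F r ^ 2) * s r ^ k
      = F R ^ 2 * s R ^ k := by
  rw [intervalIntegral.integral_eq_sub_of_hasDerivAt_of_nonneg
    (f := fun r => F r ^ 2 * s r ^ k) hR
    (((hFc.pow 2).mul (hs.continuous.continuousOn.pow k)).mono Icc_subset_Ici_self)
    (fun x hx => ?_) (fun x hx => ?_), hF0]
  · ring
  · exact hasDerivAt_sq_mul_pow (hF2.hasDerivAt_and_hasDerivAt_deriv isOpen_Ioi hx.1).1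
      (hs x).hasDerivAt (hspos x hx.1).ne'
  · have := hspos x hx.1
    have := hs' x hx.1
    have := hFpos x hx.1
    have := hF'pos x hx.1
    positivity

end RadialSolution

theorem steklov_eigenvalue_ball_radial_general
    (κ : ℝ) (hκ : κ ≤ 0) (n : ℕ) (hn : 2 ≤ n) (F : ℝ → ℝ)
    (hFc : ContinuousOn F (Ici 0))
    (hF2 : ContDiffOn ℝ 2 F (Ioi 0))
    (hF0 : F 0 = 0)
    (hODE : ∀ r > 0, deriv (deriv F) r
      + ((n : ℝ) - 1) * (deriv (snk κ) r / snk κ r) * deriv F r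
      - (((n : ℝ) - 1) / (snk κ r) ^ 2) * F r = 0)
    (hFpos : ∀ r > 0, 0 < F r) (hF'pos : ∀ r > 0, 0 < deriv F r)
    (G : ℝ → ℝ)
    (hG : ∀ r, G r = 2 * F r * deriv F r + ((n : ℝ) - 1) * (deriv (snk κ) r / snk κ r) * (F r) ^ 2)
    (H : ℝ → ℝ)
    (hH : ∀ r, H r = (deriv F r) ^ 2 + ((n : ℝ) - 1) * (F r) ^ 2 / (snk κ r) ^ 2) :
    ∀ R > 0,
      (∫ r in (0 : ℝ)..R, H r * snk κ r ^ (n - 1)) /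
        (∫ r in (0 : ℝ)..R, G r * snk κ r ^ (n - 1)) = deriv F R / F R := by
  intro R hR
  obtain ⟨k, rfl⟩ : ∃ k, n = k + 1 := ⟨n - 1, by omega⟩
  have hk : ((k + 1 : ℕ) : ℝ) - 1 = k := by push_cast; ring
  simp only [hk] at hODE hG hH
  simp only [hG, hH, Nat.add_sub_cancel]
  have hs : Differentiable ℝ (snk κ) := fun t => (hasDerivAt_snk hκ t).differentiableAt
  have hspos : ∀ r > 0, 0 < snk κ r := fun r hr => snk_pos hκ hr
  have hs' : ∀ r > 0, 0 ≤ deriv (snk κ) r := fun r _ => by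
    rw [(hasDerivAt_snk hκ r).deriv]
    positivity
  rw [integral_eq_mul_deriv_mul_pow hFc hF0 hs hspos hF2 hODE hFpos hF'pos hR.le,
    integral_eq_sq_mul_pow hFc hF0 hs hspos hs' hF2 hFpos hF'pos hR.le]
  have := hFpos R hR
  have := hspos R hR
  field_simp

/-- Proposition 4.4 in radial form: for every `R > 0`,
`(∫₀^R H sn_κ^{n-1} dr)/(∫₀^R G sn_κ^{n-1} dr) = F'(R)/F(R)`, the first nonzero Steklov
eigenvalue of the geodesic ball of radius `R` in the space form of curvature `κ`. -/
theorem steklov_eigenvalue_ball_radial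
    (κ : ℝ) (hκ : κ ≤ 0) (n : ℕ) (hn : 2 ≤ n) (F : ℝ → ℝ)
    (hFc : ContinuousOn F (Ici 0))
    (hF2 : ContDiffOn ℝ 2 F (Ioi 0))
    (hF0 : F 0 = 0)
    (hF'0 : HasDerivWithinAt F 1 (Ici 0) 0)
    (hODE : ∀ r > 0, deriv (deriv F) r
      + ((n : ℝ) - 1) * (deriv (snk κ) r / snk κ r) * deriv F r
      - (((n : ℝ) - 1) / (snk κ r) ^ 2) * F r = 0)
    (hFpos : ∀ r > 0, 0 < F r) (hF'pos : ∀ r > 0, 0 < deriv F r)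
    (G : ℝ → ℝ)
    (hG : ∀ r, G r = 2 * F r * deriv F r + ((n : ℝ) - 1) * (deriv (snk κ) r / snk κ r) * (F r) ^ 2)
    (H : ℝ → ℝ)
    (hH : ∀ r, H r = (deriv F r) ^ 2 + ((n : ℝ) - 1) * (F r) ^ 2 / (snk κ r) ^ 2) :
    ∀ R > 0,
      (∫ r in (0 : ℝ)..R, H r * snk κ r ^ (n - 1)) /
        (∫ r in (0 : ℝ)..R, G r * snk κ r ^ (n - 1)) = deriv F R / F R :=
  steklov_eigenvalue_ball_radial_general κ hκ n hn F hFc hF2 hF0 hODE hFpos hF'pos G hG H hH
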